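/- When vertex i migrates from C(i) to C(j*), for any vertex v adjacent to i with edge weight ω_{vi} > 0, v ∈ C(v) with C(v) ∉ {C(i), C(j*)} (or v ∈ C(i)), the new modularity gain of moving v to C(j*) equals the old gain plus ω_{vi}/(2m) + (terms of order d(v)·d(i)/(2m)²); in particular, if ω_{vi}·(2m) > 2·d(v)·d(i), the gain of v moving to C(j*) strictly increases. -/

import Mathlib

open Finset

namespace DynCD

variable {V : Type*} [Fintype V] [DecidableEq V]

/-- Weighted degree of a vertex. -/
noncomputable def deg (w : V → V → ℝ) (v : V) : ℝ := ∑ u, w v u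

/-- Total weight of edges from `v` into the community `C`. -/
noncomputable def eTo (w : V → V → ℝ) (v : V) (C : Finset V) : ℝ := ∑ u ∈ C, w v u

/-- Sum of the weighted degrees of the vertices of `C`. -/
noncomputable def aOf (w : V → V → ℝ) (C : Finset V) : ℝ := ∑ v ∈ C, deg w v

/-- Modularity gain of moving `v` from its community `Cv` to the community `C`:
`ΔQ_{v→C} = (e_{v→C} − e_{v→Cv∖{v}})/(2m) + (d(v)·a_{Cv∖{v}} − d(v)·a_C)/(2m)²`. -/
noncomputable def gain (w : V → V → ℝ) (m : ℝ) (v : V) (Cv C : Finset V) : ℝ :=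
  (eTo w v C - eTo w v (Cv.erase v)) / (2 * m)
    + (deg w v * aOf w (Cv.erase v) - deg w v * aOf w C) / (2 * m) ^ 2

/-- Modularity of the set of communities `P` with community assignment `Cfun`:
`Q = (1/2m)·(Σ_v e_{v→C(v)} − (1/2m)·Σ_{C∈P} a_C²)`. -/
noncomputable def modularity (w : V → V → ℝ) (m : ℝ)
    (P : Finset (Finset V)) (Cfun : V → Finset V) : ℝ :=
  (1 / (2 * m)) * ((∑ v, eTo w v (Cfun v)) - (1 / (2 * m)) * ∑ C ∈ P, (aOf w C) ^ 2)

/-- Total weight of the edges inside `C` (each unordered edge counted once). -/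
noncomputable def inW (w : V → V → ℝ) (C : Finset V) : ℝ :=
  (1 / 2) * ∑ v ∈ C, ∑ u ∈ C, w v u

/-- The new set of communities after moving `v` from community `Cv` to community `C`. -/
def moveP (P : Finset (Finset V)) (Cv C : Finset V) (v : V) : Finset (Finset V) :=
  insert (insert v C) (insert (Cv.erase v) ((P.erase Cv).erase C))

/-- The new community assignment after moving `v` from community `Cv` to community `C`. -/
def moveC (Cfun : V → Finset V) (Cv C : Finset V) (v : V) : V → Finset V :=
  fun u => if u = v then insert v C
    else if Cfun u = Cv then Cv.erase v
    else if Cfun u = C then insert v C else Cfun u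

/-- `(P, Cfun)` forms a partition of the vertex set into communities. -/
def IsPartition (P : Finset (Finset V)) (Cfun : V → Finset V) : Prop :=
  (∀ v : V, Cfun v ∈ P ∧ v ∈ Cfun v) ∧ (∀ C ∈ P, ∀ u ∈ C, Cfun u = C)

end DynCD

/-! Adding a vertex `i ∉ C` to the target community `C` of `v` raises `e_{v→C}` by `ω_{vi}` and
`a_C` by `d(i)`; removing `i ≠ v` from the source community `Cv` lowers `e_{v→Cv∖{v}}` and
`a_{Cv∖{v}}` by the same amounts. Either way the gain of `v` shifts by
`ω_{vi}/(2m) − d(v)·d(i)/(2m)²`, which is positive once `ω_{vi}·2m > d(v)·d(i)`. When `v` lies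
in the community `i` leaves, both shifts occur. -/

namespace DynCD

variable {V : Type*}

noncomputable def edgeShift [Fintype V] (w : V → V → ℝ) (m : ℝ) (v i : V) : ℝ :=
  w v i / (2 * m) - deg w v * deg w i / (2 * m) ^ 2

section

variable {w : V → V → ℝ} {m : ℝ} {v i : V} {C Cv : Finset V}

theorem deg_nonneg [Fintype V] (hnn : ∀ u, 0 ≤ w v u) : 0 ≤ deg w v :=
  sum_nonneg fun u _ => hnn u

theorem eTo_insert [DecidableEq V] (hi : i ∉ C) : eTo w v (insert i C) = eTo w v C + w v i := by
  rw [eTo, eTo, sum_insert hi, add_comm]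

theorem aOf_insert [Fintype V] [DecidableEq V] (hi : i ∉ C) :
    aOf w (insert i C) = aOf w C + deg w i := by
  rw [aOf, aOf, sum_insert hi, add_comm]

theorem eTo_erase [DecidableEq V] (hi : i ∈ C) : eTo w v (C.erase i) = eTo w v C - w v i :=
  sum_erase_eq_sub hi

theorem aOf_erase [Fintype V] [DecidableEq V] (hi : i ∈ C) :
    aOf w (C.erase i) = aOf w C - deg w i :=
  sum_erase_eq_sub hi

theorem gain_insert_target [Fintype V] [DecidableEq V] (hi : i ∉ C) :
    gain w m v Cv (insert i C) = gain w m v Cv C + edgeShift w m v i := by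
  rw [gain, gain, edgeShift, eTo_insert hi, aOf_insert hi]
  ring

theorem gain_erase_source [Fintype V] [DecidableEq V] (hi : i ∈ Cv) (hvi : v ≠ i) :
    gain w m v (Cv.erase i) C = gain w m v Cv C + edgeShift w m v i := by
  have hi' : i ∈ Cv.erase v := mem_erase.2 ⟨hvi.symm, hi⟩
  rw [gain, gain, edgeShift, erase_right_comm, eTo_erase hi', aOf_erase hi']
  ring

theorem edgeShift_pos [Fintype V] (hm : 0 < m) (h : deg w v * deg w i < w v i * (2 * m)) :
    0 < edgeShift w m v i := by
  have h2m : 0 < 2 * m := by positivity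
  rw [edgeShift, div_sub_div _ _ h2m.ne' (pow_pos h2m 2).ne']
  apply div_pos _ (by positivity)
  nlinarith

end

variable [Fintype V] [DecidableEq V]

theorem stmt3_general (w : V → V → ℝ) (m : ℝ) (hm : 0 < m)
    (hnn : ∀ u v, 0 ≤ w u v)
    (i v : V) (Ci Cj Cv : Finset V)
    (hiCi : i ∈ Ci) (hiCj : i ∉ Cj)
    (hvi : v ≠ i) :
    (Cv = Ci →
      gain w m v (Ci.erase i) (insert i Cj)
        = gain w m v Cv Cj + 2 * w v i / (2 * m)
            - 2 * deg w v * deg w i / (2 * m) ^ 2) ∧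
    (Cv ≠ Ci →
      gain w m v Cv (insert i Cj)
        = gain w m v Cv Cj + w v i / (2 * m)
            - deg w v * deg w i / (2 * m) ^ 2) ∧
    (w v i * (2 * m) > 2 * deg w v * deg w i →
      gain w m v (if Cv = Ci then Ci.erase i else Cv) (insert i Cj)
        > gain w m v Cv Cj) := by
  have hsame :
      gain w m v (Ci.erase i) (insert i Cj) = gain w m v Ci Cj + 2 * edgeShift w m v i := by
    rw [gain_erase_source hiCi hvi, gain_insert_target hiCj]
    ring
  have hother : gain w m v Cv (insert i Cj) = gain w m v Cv Cj + edgeShift w m v i :=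
    gain_insert_target hiCj
  refine ⟨?_, ?_, fun hbig => ?_⟩
  · rintro rfl
    rw [hsame, edgeShift]
    ring
  · intro _
    rw [hother, edgeShift]
    ring
  have hdeg : 0 ≤ deg w v * deg w i := mul_nonneg (deg_nonneg (hnn v)) (deg_nonneg (hnn i))
  have hpos : 0 < edgeShift w m v i := edgeShift_pos hm (by linarith)
  split_ifs with hc
  · rw [hsame, hc]
    linarith
  · rw [hother]
    linarith

/-- When `i` migrates from `C(i)` to `C(j*)`, for a neighbor `v` of `i` (edge weight
`ω_{vi} > 0`, `v ∉ C(j*)`), the new gain of moving `v` to `C(j*)` equals the old gain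
plus `ω_{vi}`-terms minus degree-product terms of order `d(v)·d(i)/(2m)²`; in
particular, if `ω_{vi}·(2m) > 2·d(v)·d(i)` the gain strictly increases. -/
theorem stmt3 (w : V → V → ℝ) (m : ℝ) (hm : 0 < m)
    (hsym : ∀ u v, w u v = w v u) (hnn : ∀ u v, 0 ≤ w u v)
    (i v : V) (Ci Cj Cv : Finset V)
    (hiCi : i ∈ Ci) (hiCj : i ∉ Cj)
    (hvCv : v ∈ Cv) (hvCj : v ∉ Cj) (hvi : v ≠ i)
    (hiv : Cv = Ci ∨ i ∉ Cv)
    (hadj : 0 < w v i) :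
    (Cv = Ci →
      gain w m v (Ci.erase i) (insert i Cj)
        = gain w m v Cv Cj + 2 * w v i / (2 * m)
            - 2 * deg w v * deg w i / (2 * m) ^ 2) ∧
    (Cv ≠ Ci →
      gain w m v Cv (insert i Cj)
        = gain w m v Cv Cj + w v i / (2 * m)
            - deg w v * deg w i / (2 * m) ^ 2) ∧
    (w v i * (2 * m) > 2 * deg w v * deg w i →
      gain w m v (if Cv = Ci then Ci.erase i else Cv) (insert i Cj)
        > gain w m v Cv Cj) :=
  stmt3_general w m hm hnn i v Ci Cj Cv hiCi hiCj hvi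

end DynCD
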